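/- arXiv:2105.01138 — 4 statements merged into one kernel-verified Lean document; each statement's English description precedes it below -/
import Mathlib

section
/- If S is a cut in a weighted graph G, k>0 an integer, and v a vertex with d_S(v) ≤ (d(v)−k)/2, then the k-fault-tolerant value does not decrease when v is moved: φ(S⊕v, k) ≥ φ(S, k), where φ(S,k) = min over all k-subsets F of V of the cut size of S−F in G−F. -/
/-!
Fix a fault set `F` with `|F| = k`. Moving `v` changes the surviving cut only on edges at `v`:
if `v ∈ F` nothing changes, and otherwise the surviving edges from `v` to the other side are lost
and those from `v` to its own side are gained. The hypothesis says `v` has at least `k` more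
edges on its own side than across, and `F` can delete at most `k` of them since edges have
weight at most `1`; so the cut avoiding `F` does not shrink for any `F`, hence neither does its
minimum. Replacing `S` by its complement reduces to the case `v ∈ S`.
-/

open Finset

noncomputable section

variable {V : Type*} [Fintype V] [DecidableEq V]

/-- Total weight of edges crossing the cut `S` (each unordered crossing edge counted once). -/
def cutW (w : V → V → ℝ) (S : Finset V) : ℝ :=
  ∑ u ∈ S, ∑ v ∈ Sᶜ, w u v

/-- Weighted degree of a vertex. -/
def degW (w : V → V → ℝ) (v : V) : ℝ := ∑ u, w v u

/-- Total weight of crossing edges incident to `v`. -/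
def crossDegW (w : V → V → ℝ) (S : Finset V) (v : V) : ℝ :=
  ∑ u, if (v ∈ S ∧ u ∉ S) ∨ (u ∈ S ∧ v ∉ S) then w v u else 0

/-- Total weight of crossing edges incident to at least one vertex of `F`. -/
def crossDegSetW (w : V → V → ℝ) (S F : Finset V) : ℝ :=
  ∑ u ∈ S, ∑ v ∈ Sᶜ, if u ∈ F ∨ v ∈ F then w u v else 0

/-- Weight of edges crossing `S` that avoid `F`: the cut `S − F` in `G − F`. -/
def cutMinusW (w : V → V → ℝ) (S F : Finset V) : ℝ :=
  ∑ u ∈ S, ∑ v ∈ Sᶜ, if u ∉ F ∧ v ∉ F then w u v else 0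

/-- The cut obtained from `S` by moving `v` to the opposite side. -/
def flipCut (S : Finset V) (v : V) : Finset V :=
  if v ∈ S then S.erase v else insert v S

/-- The k-fault-tolerant value of the cut `S` against an adaptive adversary. -/
noncomputable def ftValW (w : V → V → ℝ) (S : Finset V) (k : ℕ) : ℝ :=
  sInf ((fun F => cutMinusW w S F) '' {F : Finset V | F.card = k})

/-- The single-fault FT value of the cut `S`. -/
noncomputable def ft1W (w : V → V → ℝ) (S : Finset V) : ℝ :=
  sInf (Set.range fun v => cutMinusW w S {v})

/-- Total edge weight of the graph. -/
def totalW (w : V → V → ℝ) : ℝ := (∑ u, ∑ v, w u v) / 2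

/-- Maximum weighted degree. -/
noncomputable def maxDegW (w : V → V → ℝ) : ℝ := sSup (Set.range (degW w))

theorem sInf_image_le_sInf_image_of_finite {ι α : Type*} [ConditionallyCompleteLattice α]
    {T : Set ι} (hT : T.Finite) {f g : ι → α} (hfg : ∀ i ∈ T, f i ≤ g i) :
    sInf (f '' T) ≤ sInf (g '' T) := by
  have := hT.to_subtype
  rw [sInf_image', sInf_image']
  exact ciInf_mono (Set.finite_range _).bddBelow fun i => hfg i i.2

theorem flipCut_compl (S : Finset V) (v : V) : flipCut Sᶜ v = (flipCut S v)ᶜ := by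
  unfold flipCut
  by_cases hv : v ∈ S
  · simp [hv, compl_erase]
  · simp [hv, compl_insert]

theorem crossDegW_compl (w : V → V → ℝ) (S : Finset V) (v : V) :
    crossDegW w Sᶜ v = crossDegW w S v := by
  unfold crossDegW
  simp only [mem_compl, not_not]
  exact sum_congr rfl fun u _ => if_congr (by tauto) rfl rfl

theorem cutMinusW_compl {w : V → V → ℝ} (hsym : ∀ u v, w u v = w v u) (S F : Finset V) :
    cutMinusW w Sᶜ F = cutMinusW w S F := by
  unfold cutMinusW
  rw [compl_compl, sum_comm]
  exact sum_congr rfl fun u _ => sum_congr rfl fun x _ => by simp only [and_comm, hsym]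

theorem crossDegW_of_mem (w : V → V → ℝ) {S : Finset V} {v : V} (hv : v ∈ S) :
    crossDegW w S v = ∑ u ∈ Sᶜ, w v u := by
  rw [crossDegW, ← sum_add_sum_compl S, sum_eq_zero fun u hu => by simp [hv, hu], zero_add]
  exact sum_congr rfl fun u hu => by simp [hv, mem_compl.1 hu]

theorem cutMinusW_erase_add (w : V → V → ℝ) {S : Finset V} {v : V} (hv : v ∈ S) (F : Finset V) :
    cutMinusW w (S.erase v) F + ∑ x ∈ Sᶜ, (if v ∉ F ∧ x ∉ F then w v x else 0) =
      cutMinusW w S F + ∑ u ∈ S.erase v, (if u ∉ F ∧ v ∉ F then w u v else 0) := by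
  have hvc : v ∉ Sᶜ := fun h => mem_compl.1 h hv
  unfold cutMinusW
  rw [compl_erase, ← add_sum_erase S _ hv]
  simp only [sum_insert hvc, sum_add_distrib]
  ring

theorem cutMinusW_le_cutMinusW_erase {w : V → V → ℝ} (hsym : ∀ u v, w u v = w v u)
    (hw0 : ∀ u v, 0 ≤ w u v) (hw1 : ∀ u v, w u v ≤ 1) (hdiag : ∀ v, w v v = 0)
    {S : Finset V} {v : V} (hv : v ∈ S) {k : ℕ} (h : crossDegW w S v ≤ (degW w v - k) / 2)
    {F : Finset V} (hF : F.card = k) :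
    cutMinusW w S F ≤ cutMinusW w (S.erase v) F := by
  have hexchange := cutMinusW_erase_add w hv F
  by_cases hvF : v ∈ F
  · simp only [hvF, not_true_eq_false, false_and, and_false, ite_false, sum_const_zero,
      add_zero] at hexchange
    exact hexchange.ge
  have hdeg : degW w v = ∑ u ∈ S, w v u + crossDegW w S v := by
    rw [crossDegW_of_mem w hv, sum_add_sum_compl, degW]
  have hlost : ∑ x ∈ Sᶜ, (if v ∉ F ∧ x ∉ F then w v x else 0) ≤ crossDegW w S v := by
    rw [crossDegW_of_mem w hv]
    exact sum_le_sum fun x _ => by split_ifs <;> simp [hw0]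
  have hfailed : ∑ u ∈ F, w v u ≤ k := by
    simpa [hF] using sum_le_card_nsmul F (w v) 1 fun u _ => hw1 v u
  have hgained : ∑ u ∈ S, w v u ≤
      ∑ u ∈ S.erase v, (if u ∉ F ∧ v ∉ F then w u v else 0) + ∑ u ∈ F, w v u := by
    rw [← sum_erase S (hdiag v), ← sum_filter_add_sum_filter_not _ (· ∉ F), sum_filter]
    gcongr with u
    · simp [hvF, hsym u v]
    · exact fun u _ _ => hw0 v u
    · exact fun u hu => by simpa using (mem_filter.1 hu).2
  linarith

theorem cutMinusW_le_cutMinusW_flipCut {w : V → V → ℝ} (hsym : ∀ u v, w u v = w v u)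
    (hw0 : ∀ u v, 0 ≤ w u v) (hw1 : ∀ u v, w u v ≤ 1) (hdiag : ∀ v, w v v = 0)
    {S : Finset V} {v : V} {k : ℕ} (h : crossDegW w S v ≤ (degW w v - k) / 2)
    {F : Finset V} (hF : F.card = k) :
    cutMinusW w S F ≤ cutMinusW w (flipCut S v) F := by
  by_cases hv : v ∈ S
  · rw [flipCut, if_pos hv]
    exact cutMinusW_le_cutMinusW_erase hsym hw0 hw1 hdiag hv h hF
  · rw [← crossDegW_compl] at h
    have key := cutMinusW_le_cutMinusW_erase hsym hw0 hw1 hdiag (mem_compl.2 hv) h hF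
    have hflip : flipCut Sᶜ v = Sᶜ.erase v := if_pos (mem_compl.2 hv)
    rwa [← hflip, flipCut_compl, cutMinusW_compl hsym, cutMinusW_compl hsym] at key

theorem stmt_2_general (w : V → V → ℝ) (hsym : ∀ u v, w u v = w v u)
    (h01 : ∀ u v, w u v = 0 ∨ w u v = 1) (hdiag : ∀ v, w v v = 0)
    (S : Finset V) (v : V) (k : ℕ)
    (h : crossDegW w S v ≤ (degW w v - k) / 2) :
    ftValW w S k ≤ ftValW w (flipCut S v) k := by
  have hw0 : ∀ u v, 0 ≤ w u v := fun u v => by rcases h01 u v with h' | h' <;> simp [h']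
  have hw1 : ∀ u v, w u v ≤ 1 := fun u v => by rcases h01 u v with h' | h' <;> simp [h']
  exact sInf_image_le_sInf_image_of_finite (Set.toFinite _) fun F hF =>
    cutMinusW_le_cutMinusW_flipCut hsym hw0 hw1 hdiag h hF

theorem stmt_2 (w : V → V → ℝ) (hsym : ∀ u v, w u v = w v u)
    (h01 : ∀ u v, w u v = 0 ∨ w u v = 1) (hdiag : ∀ v, w v v = 0)
    (S : Finset V) (v : V) (k : ℕ) (hk : 0 < k) (hkcard : k ≤ Fintype.card V)
    (h : crossDegW w S v ≤ (degW w v - k) / 2) :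
    ftValW w S k ≤ ftValW w (flipCut S v) k :=
  stmt_2_general w hsym h01 hdiag S v k h
end
end

section
/- Let G=(V,E,w) be a weighted graph with total edge weight m, k a positive integer, and let U be the uniform distribution over all 2^|V| cuts. Then for every k-subset F, E_{S∼U}[C_{S−F,G−F}] = (m − d(F))/2 ≥ (m − Δ_k)/2. Therefore μ(U,k,G) ≥ (1/2)·max_D μ(D,k,G), i.e., the uniform distribution is a 1/2-approximation for k-OFTcut. -/
/-!
Moving a single vertex to the other side is an involution on cuts, so each pair `u ≠ v` is split
with `u ∈ S`, `v ∉ S` by exactly a quarter of all cuts `S`. Hence the uniform expectation of the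
cut of `G − F` is half the weight of `G − F`, namely `(m − d(F)) / 2`, and the adversary's best
reply is a `k`-set attaining `Δ_k`. Against that same set, no cut of `G − F` exceeds the weight
`m − Δ_k` of `G − F`, which bounds the value of every distribution.
-/

open Finset

noncomputable section

variable {V : Type*} [Fintype V] [DecidableEq V]

/-- Total weight of edges incident to at least one vertex of `F`. -/
def degSetW (w : V → V → ℝ) (F : Finset V) : ℝ :=
  (∑ u, ∑ v, if u ∈ F ∨ v ∈ F then w u v else 0) / 2

/-- `Δ_k`: maximum weighted degree of a `k`-subset of vertices. -/
noncomputable def deltaK (w : V → V → ℝ) (k : ℕ) : ℝ :=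
  sSup ((degSetW w) '' {F : Finset V | F.card = k})

/-- The `k`-FT value of a distribution `D` over cuts against an oblivious adversary. -/
noncomputable def muD (w : V → V → ℝ) (k : ℕ) (D : Finset V → ℝ) : ℝ :=
  sInf ((fun F => ∑ S : Finset V, D S * cutMinusW w S F) '' {F : Finset V | F.card = k})

/-- The uniform distribution over all cuts. -/
def uniformD (V : Type*) [Fintype V] : Finset V → ℝ :=
  fun _ => 1 / 2 ^ (Fintype.card V)

open scoped symmDiff

lemma card_filter_symmDiff_singleton (P : Finset V → Prop) [DecidablePred P] (u : V) :
    #{S : Finset V | P (S ∆ {u})} = #{S : Finset V | P S} :=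
  card_nbij' (· ∆ {u}) (· ∆ {u}) (fun S hS => by simpa using hS)
    (fun S hS => by simpa [symmDiff_symmDiff_cancel_right] using hS)
    (fun S _ => symmDiff_symmDiff_cancel_right _ _)
    (fun S _ => symmDiff_symmDiff_cancel_right _ _)

lemma four_mul_card_filter_mem_and_not_mem {u v : V} (huv : u ≠ v) :
    4 * #{S : Finset V | u ∈ S ∧ v ∉ S} = 2 ^ Fintype.card V := by
  have flip_u : #{S : Finset V | u ∈ S ∧ v ∉ S} = #{S : Finset V | u ∉ S ∧ v ∉ S} := by
    rw [← card_filter_symmDiff_singleton _ u]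
    simp [mem_symmDiff, huv.symm]
  have flip_v : #{S : Finset V | v ∈ S} = #{S : Finset V | v ∉ S} := by
    rw [← card_filter_symmDiff_singleton _ v]
    simp [mem_symmDiff]
  have split_u : #{S : Finset V | u ∈ S ∧ v ∉ S} + #{S : Finset V | u ∉ S ∧ v ∉ S}
      = #{S : Finset V | v ∉ S} := by
    rw [← card_filter_add_card_filter_not (s := {S : Finset V | v ∉ S}) (u ∈ ·),
      filter_filter, filter_filter]
    simp only [and_comm]
  have split_v : #{S : Finset V | v ∈ S} + #{S : Finset V | v ∉ S} = 2 ^ Fintype.card V := by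
    rw [card_filter_add_card_filter_not, card_univ, Fintype.card_finset]
  omega

lemma cutW_eq_sum_ite (g : V → V → ℝ) (S : Finset V) :
    cutW g S = ∑ u, ∑ v, if u ∈ S ∧ v ∉ S then g u v else 0 := by
  simp only [cutW, ite_and, ← mem_compl, sum_ite_irrel, sum_const_zero, sum_ite_mem, univ_inter]

lemma sum_cutW {g : V → V → ℝ} (hg : ∀ v, g v v = 0) :
    ∑ S : Finset V, cutW g S = 2 ^ Fintype.card V / 2 * totalW g := by
  have crossing (u v : V) : (#{S : Finset V | u ∈ S ∧ v ∉ S} : ℝ) * g u v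
      = 2 ^ Fintype.card V / 4 * g u v := by
    obtain rfl | huv := eq_or_ne u v
    · simp [hg]
    · rw [← Nat.cast_ofNat, ← Nat.cast_pow, ← four_mul_card_filter_mem_and_not_mem huv]
      push_cast; ring
  calc ∑ S : Finset V, cutW g S
      = ∑ u, ∑ v, ∑ S : Finset V, if u ∈ S ∧ v ∉ S then g u v else 0 := by
        simp only [cutW_eq_sum_ite]
        rw [sum_comm]
        exact sum_congr rfl fun u _ => sum_comm
    _ = 2 ^ Fintype.card V / 2 * totalW g := by
        simp only [← sum_filter, sum_const, nsmul_eq_mul, crossing, totalW, ← mul_sum]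
        ring

lemma sum_uniformD_mul_cutW {g : V → V → ℝ} (hg : ∀ v, g v v = 0) :
    ∑ S : Finset V, uniformD V S * cutW g S = totalW g / 2 := by
  simp only [uniformD, ← mul_sum, sum_cutW hg]
  field_simp

lemma cutW_le_totalW {g : V → V → ℝ} (hsym : ∀ u v, g u v = g v u) (hnn : ∀ u v, 0 ≤ g u v)
    (S : Finset V) : cutW g S ≤ totalW g := by
  have reverse : ∑ u ∈ Sᶜ, ∑ v ∈ S, g u v = cutW g S := by
    rw [cutW, sum_comm]
    simp only [hsym]
  have inner_le (s : Finset V) (u : V) : ∑ v ∈ s, g u v ≤ ∑ v, g u v :=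
    sum_le_univ_sum_of_nonneg (hnn u)
  have double : cutW g S + ∑ u ∈ Sᶜ, ∑ v ∈ S, g u v ≤ ∑ u, ∑ v, g u v := by
    rw [← sum_add_sum_compl S]
    exact add_le_add (sum_le_sum fun u _ => inner_le _ u) (sum_le_sum fun u _ => inner_le _ u)
  rw [totalW]
  linarith

/-- The weights of `G − F`. -/
def deleteW (w : V → V → ℝ) (F : Finset V) : V → V → ℝ :=
  fun u v => if u ∉ F ∧ v ∉ F then w u v else 0

lemma cutMinusW_eq_cutW_deleteW (w : V → V → ℝ) (S F : Finset V) :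
    cutMinusW w S F = cutW (deleteW w F) S := rfl

lemma totalW_deleteW (w : V → V → ℝ) (F : Finset V) :
    totalW (deleteW w F) = totalW w - degSetW w F := by
  simp only [totalW, degSetW, deleteW, ← sub_div, ← sum_sub_distrib]
  congr 1
  refine sum_congr rfl fun u _ => sum_congr rfl fun v _ => ?_
  by_cases hu : u ∈ F <;> by_cases hv : v ∈ F <;> simp [hu, hv]

lemma sum_uniformD_mul_cutMinusW {w : V → V → ℝ} (hdiag : ∀ v, w v v = 0) (F : Finset V) :
    ∑ S : Finset V, uniformD V S * cutMinusW w S F = (totalW w - degSetW w F) / 2 := by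
  simp only [cutMinusW_eq_cutW_deleteW]
  rw [sum_uniformD_mul_cutW fun v => by simp [deleteW, hdiag], totalW_deleteW]

lemma cutMinusW_le {w : V → V → ℝ} (hsym : ∀ u v, w u v = w v u) (hnn : ∀ u v, 0 ≤ w u v)
    (S F : Finset V) : cutMinusW w S F ≤ totalW w - degSetW w F := by
  rw [cutMinusW_eq_cutW_deleteW, ← totalW_deleteW]
  refine cutW_le_totalW (fun u v => ?_) (fun u v => ?_) S
  · simp only [deleteW, and_comm, hsym u v]
  · unfold deleteW; split_ifs <;> simp [hnn u v]

lemma degSetW_le_deltaK (w : V → V → ℝ) {k : ℕ} {F : Finset V} (hF : F.card = k) :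
    degSetW w F ≤ deltaK w k :=
  le_csSup (Set.toFinite _).bddAbove ⟨F, hF, rfl⟩

omit [DecidableEq V] in
lemma setOf_card_eq_nonempty {k : ℕ} (hk : k ≤ Fintype.card V) :
    {F : Finset V | F.card = k}.Nonempty := by
  obtain ⟨F, -, hF⟩ := exists_subset_card_eq (s := (univ : Finset V)) (n := k) (by rwa [card_univ])
  exact ⟨F, hF⟩

lemma exists_degSetW_eq_deltaK (w : V → V → ℝ) {k : ℕ} (hk : k ≤ Fintype.card V) :
    ∃ F : Finset V, F.card = k ∧ degSetW w F = deltaK w k :=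
  ((setOf_card_eq_nonempty hk).image _).csSup_mem (Set.toFinite _)

lemma muD_le_of_card_eq (w : V → V → ℝ) {k : ℕ} (D : Finset V → ℝ) {F : Finset V}
    (hF : F.card = k) : muD w k D ≤ ∑ S : Finset V, D S * cutMinusW w S F :=
  csInf_le (Set.toFinite _).bddBelow ⟨F, hF, rfl⟩

lemma le_muD_of_forall (w : V → V → ℝ) {k : ℕ} (hk : k ≤ Fintype.card V) (D : Finset V → ℝ)
    {c : ℝ} (hc : ∀ F : Finset V, F.card = k → c ≤ ∑ S : Finset V, D S * cutMinusW w S F) :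
    c ≤ muD w k D :=
  le_csInf ((setOf_card_eq_nonempty hk).image _) (by rintro _ ⟨F, hF, rfl⟩; exact hc F hF)

lemma muD_uniformD {w : V → V → ℝ} (hdiag : ∀ v, w v v = 0) {k : ℕ}
    (hk : k ≤ Fintype.card V) : muD w k (uniformD V) = (totalW w - deltaK w k) / 2 := by
  obtain ⟨F₀, hF₀, hF₀max⟩ := exists_degSetW_eq_deltaK w hk
  refine le_antisymm ?_ (le_muD_of_forall w hk _ fun F hF => ?_)
  · simpa [sum_uniformD_mul_cutMinusW hdiag, hF₀max] using
      muD_le_of_card_eq w (uniformD V) hF₀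
  · rw [sum_uniformD_mul_cutMinusW hdiag]
    linarith [degSetW_le_deltaK w hF]

lemma muD_le_totalW_sub_deltaK {w : V → V → ℝ} (hsym : ∀ u v, w u v = w v u)
    (hnn : ∀ u v, 0 ≤ w u v) {k : ℕ} (hk : k ≤ Fintype.card V) {D : Finset V → ℝ}
    (hD0 : ∀ S, 0 ≤ D S) (hD1 : ∑ S : Finset V, D S = 1) :
    muD w k D ≤ totalW w - deltaK w k := by
  obtain ⟨F₀, hF₀, hF₀max⟩ := exists_degSetW_eq_deltaK w hk
  calc muD w k D ≤ ∑ S : Finset V, D S * cutMinusW w S F₀ := muD_le_of_card_eq w D hF₀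
    _ ≤ ∑ S : Finset V, D S * (totalW w - degSetW w F₀) :=
        sum_le_sum fun S _ => mul_le_mul_of_nonneg_left (cutMinusW_le hsym hnn S F₀) (hD0 S)
    _ = totalW w - deltaK w k := by rw [← sum_mul, hD1, one_mul, hF₀max]

omit [DecidableEq V] in
lemma sum_uniformD : ∑ S : Finset V, uniformD V S = 1 := by
  simp [uniformD, Fintype.card_finset]

theorem stmt_12_general (w : V → V → ℝ) (hsym : ∀ u v, w u v = w v u)
    (hdiag : ∀ v, w v v = 0) (hnn : ∀ u v, 0 ≤ w u v)
    (k : ℕ) (hkcard : k ≤ Fintype.card V) :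
    (∀ F : Finset V, F.card = k →
        (∑ S : Finset V, uniformD V S * cutMinusW w S F
            = (totalW w - degSetW w F) / 2) ∧
        (totalW w - deltaK w k) / 2
            ≤ ∑ S : Finset V, uniformD V S * cutMinusW w S F) ∧
      (sSup ((fun D => muD w k D) ''
          {D : Finset V → ℝ | (∀ S, 0 ≤ D S) ∧ ∑ S : Finset V, D S = 1})) / 2
        ≤ muD w k (uniformD V) := by
  refine ⟨fun F hF => ⟨sum_uniformD_mul_cutMinusW hdiag F, ?_⟩, ?_⟩
  · rw [sum_uniformD_mul_cutMinusW hdiag]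
    linarith [degSetW_le_deltaK w hF]
  · have uniform_mem : uniformD V ∈
        {D : Finset V → ℝ | (∀ S, 0 ≤ D S) ∧ ∑ S : Finset V, D S = 1} :=
      ⟨fun S => by unfold uniformD; positivity, sum_uniformD⟩
    have best_le : sSup ((fun D => muD w k D) ''
        {D : Finset V → ℝ | (∀ S, 0 ≤ D S) ∧ ∑ S : Finset V, D S = 1})
          ≤ totalW w - deltaK w k :=
      csSup_le ⟨_, _, uniform_mem, rfl⟩ fun _ ⟨_, ⟨hD0, hD1⟩, hD⟩ =>
        hD ▸ muD_le_totalW_sub_deltaK hsym hnn hkcard hD0 hD1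
    rw [muD_uniformD hdiag hkcard]
    linarith

theorem stmt_12 (w : V → V → ℝ) (hsym : ∀ u v, w u v = w v u)
    (hdiag : ∀ v, w v v = 0) (hnn : ∀ u v, 0 ≤ w u v)
    (k : ℕ) (hk : 0 < k) (hkcard : k ≤ Fintype.card V) :
    (∀ F : Finset V, F.card = k →
        (∑ S : Finset V, uniformD V S * cutMinusW w S F
            = (totalW w - degSetW w F) / 2) ∧
        (totalW w - deltaK w k) / 2
            ≤ ∑ S : Finset V, uniformD V S * cutMinusW w S F) ∧
      (sSup ((fun D => muD w k D) ''
          {D : Finset V → ℝ | (∀ S, 0 ≤ D S) ∧ ∑ S : Finset V, D S = 1})) / 2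
        ≤ muD w k (uniformD V) :=
  stmt_12_general w hsym hdiag hnn k hkcard
end
end

section
/- Let G=(V,E) be a graph and let G'=(V',E') be obtained from G by adding n+1 new vertices u*, u_1,…,u_n (n=|V|), edges {u*,u_i} for all i, and one edge {u*,v_1} for an arbitrary fixed vertex v_1∈V. Then for the cut S' = S ∪ {u*} (S⊆V any cut of G), the vertex u* is a critical vertex of S' in G' for a single fault: φ(S',G') = C_{S'−u*, G'−u*} = C_{S,G}. -/
open Finset

noncomputable section

variable {V : Type*} [Fintype V] [DecidableEq V]

/-- The graph `G'` obtained from `G` (given by weights `w` on `V`) by adding a star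
with center `u* = Sum.inr none`, leaves `u_i = Sum.inr (some i)` for `i : V`
(`n = |V|` leaves), and one extra edge from `u*` to the fixed vertex `v1 ∈ V`. -/
def wExt (w : V → V → ℝ) (v1 : V) : (V ⊕ Option V) → (V ⊕ Option V) → ℝ
  | Sum.inl a, Sum.inl b => w a b
  | Sum.inl a, Sum.inr none => if a = v1 then 1 else 0
  | Sum.inr none, Sum.inl a => if a = v1 then 1 else 0
  | Sum.inl _, Sum.inr (some _) => 0
  | Sum.inr (some _), Sum.inl _ => 0
  | Sum.inr none, Sum.inr (some _) => 1
  | Sum.inr (some _), Sum.inr none => 1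
  | Sum.inr none, Sum.inr none => 0
  | Sum.inr (some _), Sum.inr (some _) => 0

/-!
Deleting a vertex `v` from `G'` removes exactly the crossing edges at `v`, so `φ(S', G')` is
attained at a vertex of maximal crossing degree. All `n` leaves lie outside `S'`, so `u*` has
crossing degree `n`, plus one if `v₁ ∉ S`. A leaf has crossing degree `1`, and a vertex `a` of `G`
has at most `n` crossing edges: if `a ∉ S` it has at most `|S| ≤ n - 1` crossing edges inside `G`
and possibly the edge to `u*`, which only exists when `a = v₁ ∉ S`. The crossing edges avoiding
`u*` are exactly those of `G`.
-/

theorem Finset.compl_disjSum {α β : Type*} [Fintype α] [Fintype β] [DecidableEq α]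
    [DecidableEq β] (s : Finset α) (t : Finset β) : (s.disjSum t)ᶜ = sᶜ.disjSum tᶜ := by
  ext (a | b) <;> simp

theorem Finset.sum_le_card_of_le_one {ι : Type*} (s : Finset ι) {f : ι → ℝ}
    (hf : ∀ i ∈ s, f i ≤ 1) : ∑ i ∈ s, f i ≤ #s := by
  simpa using sum_le_card_nsmul s f 1 hf

theorem Finset.sum_compl_singleton_none {α M : Type*} [Fintype α] [DecidableEq α]
    [AddCommMonoid M] (f : Option α → M) :
    ∑ o ∈ ({none}ᶜ : Finset (Option α)), f o = ∑ a, f (some a) := by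
  have : ({none}ᶜ : Finset (Option α)) = univ.map Function.Embedding.some := by
    ext (_ | a) <;> simp
  rw [this, sum_map]
  rfl

theorem Finset.insert_inr_image_inl {α β : Type*} [DecidableEq α] [DecidableEq β]
    (s : Finset α) (b : β) : insert (Sum.inr b) (s.image Sum.inl) = s.disjSum {b} := by
  ext (a | b') <;> simp [eq_comm]

section Cuts

variable (w : V → V → ℝ) {S : Finset V}

theorem cutW_eq_cutMinusW_add_crossDegSetW (S F : Finset V) :
    cutW w S = cutMinusW w S F + crossDegSetW w S F := by
  simp only [cutW, cutMinusW, crossDegSetW, ← sum_add_distrib]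
  refine sum_congr rfl fun u _ => sum_congr rfl fun v _ => ?_
  by_cases hu : u ∈ F <;> by_cases hv : v ∈ F <;> simp [hu, hv]

theorem crossDegSetW_singleton_of_mem {v : V} (hv : v ∈ S) :
    crossDegSetW w S {v} = ∑ x ∈ Sᶜ, w v x := by
  rw [crossDegSetW, sum_eq_single_of_mem v hv fun u _ hu => sum_eq_zero fun x hx => ?_]
  · simp
  · grind [mem_compl]

theorem crossDegSetW_singleton_of_notMem {v : V} (hv : v ∉ S) :
    crossDegSetW w S {v} = ∑ u ∈ S, w u v := by
  refine sum_congr rfl fun u hu => ?_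
  rw [sum_eq_single_of_mem v (mem_compl.mpr hv) fun x _ hx => ?_]
  · simp
  · grind

theorem ft1W_eq_cutMinusW_of_forall_crossDegSetW_le {u : V}
    (hu : ∀ v, crossDegSetW w S {v} ≤ crossDegSetW w S {u}) :
    ft1W w S = cutMinusW w S {u} := by
  refine IsLeast.csInf_eq ⟨⟨u, rfl⟩, ?_⟩
  rintro _ ⟨v, rfl⟩
  have := cutW_eq_cutMinusW_add_crossDegSetW w S {u}
  have := cutW_eq_cutMinusW_add_crossDegSetW w S {v}
  linarith [hu v]

end Cuts

section Star

variable (w : V → V → ℝ) (v1 : V) (S : Finset V)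

theorem cutMinusW_wExt_center :
    cutMinusW (wExt w v1) (S.disjSum {none}) {Sum.inr none} = cutW w S := by
  simp [cutMinusW, cutW, compl_disjSum, sum_compl_singleton_none, wExt]

theorem crossDegSetW_wExt_center :
    crossDegSetW (wExt w v1) (S.disjSum {none}) {Sum.inr none}
      = (if v1 ∈ S then 0 else 1) + Fintype.card V := by
  rw [crossDegSetW_singleton_of_mem _ (by simp), compl_disjSum, sum_disjSum,
    sum_compl_singleton_none]
  simp [wExt]

theorem crossDegSetW_wExt_le_center (hw : ∀ a b, w a b ≤ 1) (v : V ⊕ Option V) :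
    crossDegSetW (wExt w v1) (S.disjSum {none}) {v}
      ≤ crossDegSetW (wExt w v1) (S.disjSum {none}) {Sum.inr none} := by
  rcases v with a | _ | i
  · rw [crossDegSetW_wExt_center]
    by_cases ha : a ∈ S
    · rw [crossDegSetW_singleton_of_mem _ (by simpa), compl_disjSum, sum_disjSum,
        sum_compl_singleton_none]
      simp only [wExt, sum_const_zero, add_zero]
      calc ∑ x ∈ Sᶜ, w a x ≤ #Sᶜ := sum_le_card_of_le_one _ fun b _ => hw a b
        _ ≤ Fintype.card V := mod_cast card_le_univ _
        _ ≤ _ := le_add_of_nonneg_left (by positivity)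
    · rw [crossDegSetW_singleton_of_notMem _ (by simpa), sum_disjSum]
      simp only [wExt, sum_singleton]
      have hS : (#S : ℝ) + 1 ≤ Fintype.card V := mod_cast card_lt_univ_of_notMem ha
      have hsum : ∑ x ∈ S, w x a ≤ #S := sum_le_card_of_le_one _ fun b _ => hw b a
      have hv1 : (if a = v1 then 1 else 0 : ℝ) ≤ if v1 ∈ S then 0 else 1 := by
        split_ifs <;> simp_all
      linarith
  · exact le_rfl
  · rw [crossDegSetW_wExt_center, crossDegSetW_singleton_of_notMem _ (by simp), sum_disjSum]
    simp only [wExt, sum_const_zero, sum_singleton, zero_add]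
    have hcard : (1 : ℝ) ≤ Fintype.card V := mod_cast Fintype.card_pos_iff.mpr ⟨v1⟩
    exact hcard.trans (le_add_of_nonneg_left (by positivity))

end Star

theorem stmt_14_general (w : V → V → ℝ)
    (h01 : ∀ u v, w u v = 0 ∨ w u v = 1)
    (v1 : V) (S : Finset V) :
    ft1W (wExt w v1) (insert (Sum.inr none) (S.image Sum.inl))
        = cutMinusW (wExt w v1) (insert (Sum.inr none) (S.image Sum.inl))
            {Sum.inr none} ∧
      cutMinusW (wExt w v1) (insert (Sum.inr none) (S.image Sum.inl))
          {Sum.inr none} = cutW w S := by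
  have hw : ∀ a b, w a b ≤ 1 := fun a b => by rcases h01 a b with h | h <;> simp [h]
  rw [insert_inr_image_inl]
  exact ⟨ft1W_eq_cutMinusW_of_forall_crossDegSetW_le _ (crossDegSetW_wExt_le_center w v1 S hw),
    cutMinusW_wExt_center w v1 S⟩

theorem stmt_14 (w : V → V → ℝ) (hsym : ∀ u v, w u v = w v u)
    (h01 : ∀ u v, w u v = 0 ∨ w u v = 1) (hdiag : ∀ v, w v v = 0)
    (v1 : V) (S : Finset V) :
    ft1W (wExt w v1) (insert (Sum.inr none) (S.image Sum.inl))
        = cutMinusW (wExt w v1) (insert (Sum.inr none) (S.image Sum.inl))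
            {Sum.inr none} ∧
      cutMinusW (wExt w v1) (insert (Sum.inr none) (S.image Sum.inl))
          {Sum.inr none} = cutW w S :=
  stmt_14_general w h01 v1 S
end
end

section
/- For every ε>0 and every n ≥ max(4, 3/(4ε)), there exists a weighted n-vertex graph G such that for a uniformly random cut S, E[φ(S)] ≤ (1/4+ε)·φ(S*), where S* is an optimal single-fault adaptive fault tolerant cut. Specifically, G is an n-cycle with two non-adjacent edges of weight n(n−3) and all other edges of weight 1; the optimal FT value is at least n(n−3), while E[φ(S)] ≤ (1/4)·φ(S*) + (3/4)(n−3). -/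
open Finset

noncomputable section

variable {V : Type*} [Fintype V] [DecidableEq V]

/-! The cut `{v_1, v_2}` is crossed by both heavy edges `e_0 = {v_0, v_1}` and `e_2 = {v_2, v_3}`,
and a single fault destroys at most one of them, so `φ(S*) ≥ n(n-3)`. If a cut `S` is not crossed
by one heavy edge, failing the endpoint `v_1` or `v_2` of the other one also destroys `e_1`, and
what survives is at most the `n - 3` light edges `e_3, …, e_{n-1}`.
Flipping the side of `v_0` and flipping the side of `v_2` generate a group of order four acting on
cuts, and each orbit contains exactly one cut crossed by both heavy edges. Averaging over the orbits
gives `E[φ(S)] ≤ φ(S*)/4 + 3(n-3)/4`, and `n ≥ 3/(4ε)` makes `3(n-3)/4 ≤ ε n(n-3) ≤ ε φ(S*)`. -/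

open scoped symmDiff

section Edge
variable {α : Type*} [DecidableEq α]

def edgeW (a b : α) : α → α → ℝ := fun u v => if s(u, v) = s(a, b) then 1 else 0

lemma edgeW_comm (a b u v : α) : edgeW a b u v = edgeW a b v u := by
  simp only [edgeW, Sym2.eq_swap]

lemma edgeW_nonneg (a b u v : α) : 0 ≤ edgeW a b u v := by
  unfold edgeW; split <;> norm_num

lemma edgeW_self {a b : α} (hab : a ≠ b) (v : α) : edgeW a b v v = 0 := by
  simp only [edgeW, Sym2.eq_iff]
  grind

end Edge

lemma cutMinusW_sum_smul {ι : Type*} (s : Finset ι) (c : ι → ℝ) (w : ι → V → V → ℝ)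
    (S F : Finset V) :
    cutMinusW (∑ i ∈ s, c i • w i : V → V → ℝ) S F = ∑ i ∈ s, c i * cutMinusW (w i) S F := by
  have hpull : ∀ u v, (if u ∉ F ∧ v ∉ F then ∑ i ∈ s, c i * w i u v else 0) =
      ∑ i ∈ s, c i * if u ∉ F ∧ v ∉ F then w i u v else 0 := by
    intro u v
    split_ifs <;> simp
  simp only [cutMinusW, Finset.sum_apply, Pi.smul_apply, smul_eq_mul, Finset.mul_sum, hpull]
  rw [Finset.sum_congr rfl fun u _ => Finset.sum_comm]
  exact Finset.sum_comm

lemma cutMinusW_edgeW {a b : V} (hab : a ≠ b) (S F : Finset V) :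
    cutMinusW (edgeW a b) S F = if Xor (a ∈ S) (b ∈ S) ∧ a ∉ F ∧ b ∉ F then 1 else 0 := by
  set alive : ℝ := if a ∉ F ∧ b ∉ F then 1 else 0
  have hsplit : ∀ u v, (if u ∉ F ∧ v ∉ F then edgeW a b u v else 0) =
      (if u = a then if v = b then alive else 0 else 0) +
        (if u = b then if v = a then alive else 0 else 0) := by
    intro u v
    simp only [alive, edgeW, Sym2.eq_iff]
    split_ifs <;> grind
  simp only [cutMinusW, hsplit, Finset.sum_add_distrib, Finset.sum_ite_irrel,
    Finset.sum_const_zero, Finset.sum_ite_eq', Finset.mem_compl]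
  simp only [alive, xor_def]
  split_ifs <;> grind

lemma cutMinusW_nonneg {w : V → V → ℝ} (hw : ∀ u v, 0 ≤ w u v) (S F : Finset V) :
    0 ≤ cutMinusW w S F :=
  Finset.sum_nonneg fun u _ => Finset.sum_nonneg fun v _ => by
    split
    exacts [hw u v, le_rfl]

lemma ft1W_le_cutMinusW {w : V → V → ℝ} (hw : ∀ u v, 0 ≤ w u v) (S : Finset V) (x : V) :
    ft1W w S ≤ cutMinusW w S {x} :=
  csInf_le ⟨0, by rintro _ ⟨v, rfl⟩; exact cutMinusW_nonneg hw S {v}⟩ ⟨x, rfl⟩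

lemma le_ft1W [Nonempty V] {w : V → V → ℝ} {S : Finset V} {c : ℝ}
    (h : ∀ x, c ≤ cutMinusW w S {x}) : c ≤ ft1W w S :=
  le_csInf (Set.range_nonempty _) (by rintro _ ⟨x, rfl⟩; exact h x)

lemma sum_div_le_of_le_off_separating {f : Finset V → ℝ} {a b c d : V} (hab : a ≠ b)
    (hac : a ≠ c) (had : a ≠ d) (hcb : c ≠ b) (hcd : c ≠ d) {M m : ℝ} (hM : ∀ S, f S ≤ M)
    (hm : ∀ S, ¬(Xor (a ∈ S) (b ∈ S) ∧ Xor (c ∈ S) (d ∈ S)) → f S ≤ m) :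
    (∑ S, f S) / 2 ^ Fintype.card V ≤ 1 / 4 * M + 3 / 4 * m := by
  have hbound : ∀ X, f X ≤ if Xor (a ∈ X) (b ∈ X) ∧ Xor (c ∈ X) (d ∈ X) then M else m := by
    intro X
    split_ifs with h
    exacts [hM X, hm X h]
  have horbit : ∀ S, f S + f (S ∆ {a}) + f (S ∆ {c}) + f (S ∆ {a} ∆ {c}) ≤ M + 3 * m := by
    intro S
    refine (add_le_add (add_le_add (add_le_add (hbound _) (hbound _)) (hbound _))
      (hbound _)).trans ?_
    by_cases ha : a ∈ S <;> by_cases hb : b ∈ S <;> by_cases hc : c ∈ S <;> by_cases hd : d ∈ S <;>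
      simp only [ha, hb, hc, hd, Finset.mem_symmDiff, Finset.mem_singleton, xor_def, hab.symm, hac,
        hac.symm, had.symm, hcb.symm, hcd.symm, and_self, and_true, and_false, or_self,
        or_true, or_false, not_true_eq_false, not_false_eq_true, ↓reduceIte] <;>
      linarith
  have hsum_flip : ∀ (T : Finset V) (g : Finset V → ℝ), ∑ S, g (S ∆ T) = ∑ S, g S :=
    fun T g => (symmDiff_left_involutive T).bijective.sum_comp g
  have hsum_flip_ac : ∑ S, f (S ∆ {a} ∆ {c}) = ∑ S, f S :=
    (hsum_flip {a} fun X => f (X ∆ {c})).trans (hsum_flip {c} f)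
  have hsum : 4 * ∑ S, f S ≤ 2 ^ Fintype.card V * (M + 3 * m) :=
    calc 4 * ∑ S, f S = ∑ S, (f S + f (S ∆ {a}) + f (S ∆ {c}) + f (S ∆ {a} ∆ {c})) := by
          rw [Finset.sum_add_distrib, Finset.sum_add_distrib, Finset.sum_add_distrib, hsum_flip,
            hsum_flip, hsum_flip_ac]
          ring
      _ ≤ ∑ _S : Finset V, (M + 3 * m) := Finset.sum_le_sum fun S _ => horbit S
      _ = 2 ^ Fintype.card V * (M + 3 * m) := by
          rw [Finset.sum_const, Finset.card_univ, Fintype.card_finset, nsmul_eq_mul]; push_cast; rfl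
  rw [div_le_iff₀ (by positivity)]
  linarith

lemma sum_le_card_sub_of_eq_zero {ι : Type*} [Fintype ι] [DecidableEq ι] {t : ι → ℝ}
    {T : Finset ι} (h0 : ∀ i ∈ T, t i = 0) (h1 : ∀ i ∉ T, t i ≤ 1) :
    ∑ i, t i ≤ Fintype.card ι - #T := by
  rw [← Finset.sum_compl_add_sum T, Finset.sum_eq_zero h0, add_zero]
  calc ∑ i ∈ Tᶜ, t i ≤ #Tᶜ • (1 : ℝ) :=
        Finset.sum_le_card_nsmul _ _ _ fun i hi => h1 i (Finset.mem_compl.mp hi)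
    _ = Fintype.card ι - #T := by
      rw [nsmul_one, Finset.card_compl, Nat.cast_sub (Finset.card_le_univ T)]

lemma finRotate_mk {n k : ℕ} (h : k + 1 < n) : finRotate n ⟨k, by omega⟩ = ⟨k + 1, h⟩ := by
  obtain ⟨m, rfl⟩ : ∃ m, n = m + 1 := ⟨n - 1, by omega⟩
  exact finRotate_of_lt (by omega)

def heavyCycleWeight (n : ℕ) (i : Fin n) : ℝ := if i.val = 0 ∨ i.val = 2 then n * (n - 3) else 1

/-- `finRotate n i` is `i + 1 mod n`, so the `i`-th summand is the edge `e_i = {v_i, v_{i+1}}`. -/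
def heavyCycleW (n : ℕ) : Fin n → Fin n → ℝ :=
  ∑ i, heavyCycleWeight n i • edgeW i (finRotate n i)

section HeavyCycle
variable {n : ℕ}

lemma heavyCycleWeight_nonneg (hn : 3 ≤ n) (i : Fin n) : 0 ≤ heavyCycleWeight n i := by
  have : (3 : ℝ) ≤ n := by exact_mod_cast hn
  unfold heavyCycleWeight
  split <;> nlinarith

lemma heavyCycleW_apply (u v : Fin n) :
    heavyCycleW n u v = ∑ i, heavyCycleWeight n i * edgeW i (finRotate n i) u v := by
  simp only [heavyCycleW, Finset.sum_apply, Pi.smul_apply, smul_eq_mul]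

lemma heavyCycleW_comm (u v : Fin n) : heavyCycleW n u v = heavyCycleW n v u := by
  simp only [heavyCycleW_apply, edgeW_comm _ _ u v]

lemma heavyCycleW_nonneg (hn : 3 ≤ n) (u v : Fin n) : 0 ≤ heavyCycleW n u v := by
  rw [heavyCycleW_apply]
  exact Finset.sum_nonneg fun i _ => mul_nonneg (heavyCycleWeight_nonneg hn i) (edgeW_nonneg ..)

lemma finRotate_ne_self (hn : 2 ≤ n) (i : Fin n) : finRotate n i ≠ i := by
  rw [← Equiv.Perm.mem_support, support_finRotate_of_le hn]
  exact Finset.mem_univ i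

lemma heavyCycleW_self (hn : 2 ≤ n) (v : Fin n) : heavyCycleW n v v = 0 := by
  rw [heavyCycleW_apply]
  exact Finset.sum_eq_zero fun i _ => by rw [edgeW_self (finRotate_ne_self hn i).symm, mul_zero]

lemma cutMinusW_heavyCycleW (hn : 2 ≤ n) (S F : Finset (Fin n)) :
    cutMinusW (heavyCycleW n) S F = ∑ i, heavyCycleWeight n i *
      if Xor (i ∈ S) (finRotate n i ∈ S) ∧ i ∉ F ∧ finRotate n i ∉ F then 1 else 0 := by
  simp only [heavyCycleW, cutMinusW_sum_smul, cutMinusW_edgeW (finRotate_ne_self hn _).symm]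

lemma heavyCycleWeight_le_cutMinusW (hn : 3 ≤ n) {S F : Finset (Fin n)} {i : Fin n}
    (hi : Xor (i ∈ S) (finRotate n i ∈ S) ∧ i ∉ F ∧ finRotate n i ∉ F) :
    heavyCycleWeight n i ≤ cutMinusW (heavyCycleW n) S F := by
  rw [cutMinusW_heavyCycleW (by omega)]
  refine le_of_eq_of_le (by rw [if_pos hi, mul_one]) (Finset.single_le_sum (fun j _ => ?_)
    (Finset.mem_univ i))
  exact mul_nonneg (heavyCycleWeight_nonneg hn j) (by split <;> norm_num)

lemma cutMinusW_heavyCycleW_le (hn : 3 ≤ n) {S F : Finset (Fin n)}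
    (h : ∀ i : Fin n, i.val < 3 → ¬(Xor (i ∈ S) (finRotate n i ∈ S) ∧ i ∉ F ∧ finRotate n i ∉ F)) :
    cutMinusW (heavyCycleW n) S F ≤ n - 3 := by
  rw [cutMinusW_heavyCycleW (by omega)]
  refine (sum_le_card_sub_of_eq_zero (T := {i : Fin n | i.val < 3}) (fun i hi => ?_)
    (fun i hi => ?_)).trans_eq ?_
  · rw [if_neg (h i (Finset.mem_filter.mp hi).2), mul_zero]
  · have hlight : heavyCycleWeight n i = 1 := by
      simp only [Finset.mem_filter, Finset.mem_univ, true_and, not_lt] at hi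
      simp only [heavyCycleWeight]
      rw [if_neg (by omega)]
    rw [hlight, one_mul]
    split <;> norm_num
  · rw [Fin.card_filter_val_lt, Fintype.card_fin, min_eq_right hn]
    norm_num

lemma le_ft1W_heavyCycleW (hn : 4 ≤ n) :
    (n : ℝ) * (n - 3) ≤ ft1W (heavyCycleW n) {⟨1, by omega⟩, ⟨2, by omega⟩} := by
  have : Nonempty (Fin n) := ⟨⟨0, by omega⟩⟩
  refine le_ft1W fun x => ?_
  by_cases hx : x.val ≤ 1
  · refine le_of_eq_of_le (by simp [heavyCycleWeight])
      (heavyCycleWeight_le_cutMinusW (n := n) (i := ⟨2, by omega⟩) (by omega) ?_)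
    rw [finRotate_mk (by omega)]
    grind [Fin.ext_iff]
  · refine le_of_eq_of_le (by simp [heavyCycleWeight])
      (heavyCycleWeight_le_cutMinusW (n := n) (i := ⟨0, by omega⟩) (by omega) ?_)
    rw [finRotate_mk (by omega)]
    grind [Fin.ext_iff]

lemma ft1W_heavyCycleW_le (hn : 4 ≤ n) (S : Finset (Fin n))
    (hS : ¬(Xor ((⟨0, by omega⟩ : Fin n) ∈ S) ((⟨1, by omega⟩ : Fin n) ∈ S) ∧
      Xor ((⟨2, by omega⟩ : Fin n) ∈ S) ((⟨3, by omega⟩ : Fin n) ∈ S))) :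
    ft1W (heavyCycleW n) S ≤ n - 3 := by
  set x : Fin n := if Xor ((⟨0, by omega⟩ : Fin n) ∈ S) ((⟨1, by omega⟩ : Fin n) ∈ S)
    then ⟨1, by omega⟩ else ⟨2, by omega⟩ with hx
  refine (ft1W_le_cutMinusW (heavyCycleW_nonneg (by omega)) S x).trans
    (cutMinusW_heavyCycleW_le (by omega) fun i hi => ?_)
  obtain ⟨k, hk⟩ := i
  rw [finRotate_mk (by simp only at hi; omega)]
  interval_cases k <;> split_ifs at hx <;> simp_all [Fin.ext_iff]

end HeavyCycle

theorem stmt_16 (ε : ℝ) (hε : 0 < ε) (n : ℕ) (hn4 : 4 ≤ n)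
    (hnε : 3 / (4 * ε) ≤ (n : ℝ)) :
    ∃ w : Fin n → Fin n → ℝ,
      (∀ u v, w u v = w v u) ∧ (∀ u v, 0 ≤ w u v) ∧ (∀ v, w v v = 0) ∧
      ∀ Sstar : Finset (Fin n),
        (∀ S : Finset (Fin n), ft1W w S ≤ ft1W w Sstar) →
          (n : ℝ) * ((n : ℝ) - 3) ≤ ft1W w Sstar ∧
          (∑ S : Finset (Fin n), ft1W w S) / 2 ^ n
              ≤ (1 / 4) * ft1W w Sstar + (3 / 4) * ((n : ℝ) - 3) ∧
          (∑ S : Finset (Fin n), ft1W w S) / 2 ^ n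
              ≤ (1 / 4 + ε) * ft1W w Sstar := by
  refine ⟨heavyCycleW n, heavyCycleW_comm, heavyCycleW_nonneg (by omega),
    heavyCycleW_self (by omega), fun Sstar hopt => ?_⟩
  have hlow : (n : ℝ) * (n - 3) ≤ ft1W (heavyCycleW n) Sstar :=
    (le_ft1W_heavyCycleW hn4).trans (hopt _)
  have havg : (∑ S, ft1W (heavyCycleW n) S) / 2 ^ n
      ≤ 1 / 4 * ft1W (heavyCycleW n) Sstar + 3 / 4 * (n - 3) := by
    simpa only [Fintype.card_fin] using
      sum_div_le_of_le_off_separating (by simp) (by simp) (by simp) (by simp) (by simp) hopt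
        (ft1W_heavyCycleW_le hn4)
  refine ⟨hlow, havg, havg.trans ?_⟩
  have hεn : 3 / 4 ≤ ε * n := by
    rw [div_le_iff₀ (by positivity)] at hnε
    linarith
  have hn3 : (0 : ℝ) ≤ n - 3 := by
    have : (4 : ℝ) ≤ n := by exact_mod_cast hn4
    linarith
  have hslack : 3 / 4 * ((n : ℝ) - 3) ≤ ε * ft1W (heavyCycleW n) Sstar :=
    calc 3 / 4 * ((n : ℝ) - 3) ≤ ε * n * (n - 3) := mul_le_mul_of_nonneg_right hεn hn3
      _ ≤ ε * ft1W (heavyCycleW n) Sstar := by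
        rw [mul_assoc]
        exact mul_le_mul_of_nonneg_left hlow hε.le
  linarith
end
end
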